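/- arXiv:1708.04269 — 2 statements merged into one kernel-verified Lean document; each statement's English description precedes it below -/
import Mathlib

section
/- ∑_{n≥1} (1/(n² 2^n)) · (1 − 1/binom(3n, n)) = π²/24. -/
/-!
The `n`-th term is `∫₀¹ tⁿ (1 - (1 - t)^(2n+2)) / ((n+1) 2^(n+1)) dt`, by the Beta integral
`∫₀¹ tⁿ (1 - t)^(2n+2) dt = 1 / ((n+1) C(3n+3, n+1))`. Summing under the integral sign gives
`∫₀¹ log (1 + t²) / t dt`, because `1 - t (1 - t)² / 2 = (1 + t²) (1 - t / 2)`. Writing instead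
`1 + t² = (1 - t⁴) / (1 - t²)` expands the same integral as `∑ 1 / (4 (n+1)²) = π² / 24`.
All series involved have nonnegative terms, so summation and integration commute.
-/

open MeasureTheory Real Set
open scoped Nat

theorem integral_pow_mul_one_sub_pow (m k : ℕ) :
    ∫ x in (0 : ℝ)..1, x ^ m * (1 - x) ^ k = m ! * k ! / (m + k + 1)! := by
  have hre (j : ℕ) : 0 < ((j : ℂ) + 1).re := by simp; positivity
  have h := Complex.betaIntegral_eq_Gamma_mul_div _ _ (hre m) (hre k)
  rw [show (m : ℂ) + 1 + (k + 1) = ((m + k + 1 : ℕ) : ℂ) + 1 by push_cast; ring,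
    Complex.Gamma_nat_eq_factorial, Complex.Gamma_nat_eq_factorial,
    Complex.Gamma_nat_eq_factorial, Complex.betaIntegral] at h
  simp only [add_sub_cancel_right, Complex.cpow_natCast] at h
  apply Complex.ofReal_injective
  rw [← intervalIntegral.integral_ofReal]
  push_cast
  exact h

theorem integral_pow_mul_one_sub_pow_eq_one_div_choose (m k : ℕ) :
    ∫ x in (0 : ℝ)..1, x ^ m * (1 - x) ^ k = 1 / ((m + 1) * (m + k + 1).choose (m + 1)) := by
  have h := Nat.add_choose_mul_factorial_mul_factorial k (m + 1)
  rw [show k + (m + 1) = m + k + 1 by ring, Nat.factorial_succ] at h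
  rw [integral_pow_mul_one_sub_pow, ← h]
  push_cast
  field_simp

theorem integral_pow_mul_one_sub_one_sub_pow (n : ℕ) :
    ∫ t in (0 : ℝ)..1, t ^ n * (1 - (1 - t) ^ (2 * n + 2)) / ((n + 1) * 2 ^ (n + 1)) =
      1 / (((n : ℝ) + 1) ^ 2 * 2 ^ (n + 1)) * (1 - 1 / (3 * (n + 1)).choose (n + 1)) := by
  simp_rw [mul_sub, mul_one]
  rw [intervalIntegral.integral_div, intervalIntegral.integral_sub, integral_pow,
    integral_pow_mul_one_sub_pow_eq_one_div_choose, show n + (2 * n + 2) + 1 = 3 * (n + 1) by ring]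
  · field_simp
    ring
  all_goals exact Continuous.intervalIntegrable (by fun_prop) 0 1

theorem integral_pow_sub_pow_div_succ (n : ℕ) :
    ∫ t in (0 : ℝ)..1, (t ^ (2 * n + 1) - t ^ (4 * n + 3)) / (n + 1) =
      1 / (4 * ((n : ℝ) + 1) ^ 2) := by
  rw [intervalIntegral.integral_div, intervalIntegral.integral_sub, integral_pow, integral_pow]
  · push_cast
    field_simp
    ring
  all_goals exact Continuous.intervalIntegrable (by fun_prop) 0 1

theorem hasSum_log_one_sub_div_one_sub {x y : ℝ} (hx : |x| < 1) (hy : |y| < 1) :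
    HasSum (fun n : ℕ => (x ^ (n + 1) - y ^ (n + 1)) / (n + 1)) (log ((1 - y) / (1 - x))) := by
  have hx1 : 1 - x ≠ 0 := by linarith [(abs_lt.1 hx).2]
  have hy1 : 1 - y ≠ 0 := by linarith [(abs_lt.1 hy).2]
  have h := (hasSum_pow_div_log_of_abs_lt_one hx).sub (hasSum_pow_div_log_of_abs_lt_one hy)
  rw [neg_sub_neg, ← log_div hy1 hx1] at h
  simpa only [sub_div] using h

theorem hasSum_pow_mul_one_sub_one_sub_pow {t : ℝ} (ht : t ∈ Ioo (0 : ℝ) 1) :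
    HasSum (fun n : ℕ => t ^ n * (1 - (1 - t) ^ (2 * n + 2)) / ((n + 1) * 2 ^ (n + 1)))
      (log (1 + t ^ 2) / t) := by
  obtain ⟨ht0, ht1⟩ := ht
  have hx : |t / 2| < 1 := by rw [abs_of_pos (by positivity)]; linarith
  have hy : |t * (1 - t) ^ 2 / 2| < 1 := by
    rw [abs_of_nonneg (by positivity)]
    nlinarith [pow_le_one₀ (sub_nonneg.2 ht1.le) (sub_le_self 1 ht0.le) (n := 2)]
  have hfactor : (1 - t * (1 - t) ^ 2 / 2) / (1 - t / 2) = 1 + t ^ 2 := by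
    rw [div_eq_iff (by linarith)]
    ring
  have h := (hasSum_log_one_sub_div_one_sub hx hy).div_const t
  rw [hfactor] at h
  refine h.congr_fun fun n => ?_
  rw [div_pow, div_pow, mul_pow, ← pow_mul]
  field_simp
  ring

theorem hasSum_pow_sub_pow_div_succ {t : ℝ} (ht : t ∈ Ioo (0 : ℝ) 1) :
    HasSum (fun n : ℕ => (t ^ (2 * n + 1) - t ^ (4 * n + 3)) / (n + 1)) (log (1 + t ^ 2) / t) := by
  obtain ⟨ht0, ht1⟩ := ht
  have hsq : t ^ 2 < 1 := pow_lt_one₀ ht0.le ht1 two_ne_zero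
  have hx : |t ^ 2| < 1 := by rwa [abs_of_pos (by positivity)]
  have hy : |t ^ 4| < 1 := by
    rw [abs_of_pos (by positivity)]; exact pow_lt_one₀ ht0.le ht1 four_ne_zero
  have hfactor : (1 - t ^ 4) / (1 - t ^ 2) = 1 + t ^ 2 := by
    rw [div_eq_iff (by linarith)]
    ring
  have h := (hasSum_log_one_sub_div_one_sub hx hy).div_const t
  rw [hfactor] at h
  refine h.congr_fun fun n => ?_
  rw [← pow_mul, ← pow_mul]
  field_simp
  ring

theorem hasSum_integral_of_nonneg {α : Type*} [MeasurableSpace α] {μ : Measure α}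
    {f : ℕ → α → ℝ} {g : α → ℝ} (hf : ∀ n, Integrable (f n) μ) (hf_nonneg : ∀ n, 0 ≤ᵐ[μ] f n)
    (hsum : Summable fun n => ∫ a, f n a ∂μ) (hg : ∀ᵐ a ∂μ, HasSum (fun n => f n a) (g a)) :
    HasSum (fun n => ∫ a, f n a ∂μ) (∫ a, g a ∂μ) := by
  have hnorm (n : ℕ) : ∫ a, ‖f n a‖ ∂μ = ∫ a, f n a ∂μ :=
    integral_congr_ae ((hf_nonneg n).mono fun a ha => Real.norm_of_nonneg ha)
  rw [← integral_congr_ae (hg.mono fun a ha => ha.tsum_eq)]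
  exact hasSum_integral_of_summable_integral_norm hf (by simpa only [hnorm] using hsum)

theorem hasSum_intervalIntegral_of_nonneg {f : ℕ → ℝ → ℝ} {g : ℝ → ℝ} {a b : ℝ} (hab : a ≤ b)
    (hf : ∀ n, Continuous (f n)) (hf_nonneg : ∀ n, ∀ t ∈ Ioo a b, 0 ≤ f n t)
    (hsum : Summable fun n => ∫ t in a..b, f n t) (hg : ∀ t ∈ Ioo a b, HasSum (f · t) (g t)) :
    HasSum (fun n => ∫ t in a..b, f n t) (∫ t in Ioo a b, g t) := by
  simp only [intervalIntegral.integral_of_le hab, integral_Ioc_eq_integral_Ioo] at hsum ⊢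
  exact hasSum_integral_of_nonneg
    (fun n => ((hf n).integrableOn_Icc).mono_set Ioo_subset_Icc_self)
    (fun n => ae_restrict_of_forall_mem measurableSet_Ioo (hf_nonneg n)) hsum
    (ae_restrict_of_forall_mem measurableSet_Ioo hg)

theorem hasSum_one_div_add_one_sq : HasSum (fun n : ℕ => 1 / ((n : ℝ) + 1) ^ 2) (π ^ 2 / 6) := by
  have h := (hasSum_nat_add_iff (f := fun n : ℕ => 1 / (n : ℝ) ^ 2) 1).2
    (by simpa using hasSum_zeta_two)
  simpa using h

theorem hasSum_one_div_four_mul_add_one_sq :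
    HasSum (fun n : ℕ => 1 / (4 * ((n : ℝ) + 1) ^ 2)) (π ^ 2 / 24) := by
  have h := hasSum_one_div_add_one_sq.div_const 4
  rw [show π ^ 2 / 6 / 4 = π ^ 2 / 24 by ring] at h
  exact h.congr_fun fun n => by rw [div_div, mul_comm]

theorem hasSum_one_sub_inv_choose_integral :
    HasSum (fun n : ℕ => 1 / (((n : ℝ) + 1) ^ 2 * 2 ^ (n + 1)) *
        (1 - 1 / (3 * (n + 1)).choose (n + 1)))
      (∫ t in Ioo (0 : ℝ) 1, log (1 + t ^ 2) / t) := by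
  have hsum : Summable fun n : ℕ => 1 / (((n : ℝ) + 1) ^ 2 * 2 ^ (n + 1)) *
      (1 - 1 / (3 * (n + 1)).choose (n + 1)) := by
    refine Summable.of_nonneg_of_le (fun n => ?_) (fun n => ?_) hasSum_one_div_add_one_sq.summable
    · have hchoose : (1 : ℝ) / (3 * (n + 1)).choose (n + 1) ≤ 1 :=
        div_le_one_of_le₀ (by exact_mod_cast Nat.choose_pos (by lia)) (by positivity)
      exact mul_nonneg (by positivity) (sub_nonneg.2 hchoose)
    · calc _ ≤ 1 / (((n : ℝ) + 1) ^ 2 * 2 ^ (n + 1)) * 1 := by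
            gcongr
            exact sub_le_self _ (by positivity)
        _ ≤ 1 / ((n : ℝ) + 1) ^ 2 := by
            rw [mul_one]
            gcongr
            exact le_mul_of_one_le_right (by positivity) (one_le_pow₀ one_le_two)
  have h := hasSum_intervalIntegral_of_nonneg zero_le_one
    (f := fun n t => t ^ n * (1 - (1 - t) ^ (2 * n + 2)) / ((n + 1) * 2 ^ (n + 1)))
    (fun n => by fun_prop)
    (fun n t ⟨ht0, ht1⟩ => div_nonneg
      (mul_nonneg (by positivity) (sub_nonneg.2 (pow_le_one₀ (by linarith) (by linarith))))
      (by positivity))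
    (by simpa only [integral_pow_mul_one_sub_one_sub_pow] using hsum)
    (fun t ht => hasSum_pow_mul_one_sub_one_sub_pow ht)
  simpa only [integral_pow_mul_one_sub_one_sub_pow] using h

theorem hasSum_one_div_four_mul_sq_integral :
    HasSum (fun n : ℕ => 1 / (4 * ((n : ℝ) + 1) ^ 2))
      (∫ t in Ioo (0 : ℝ) 1, log (1 + t ^ 2) / t) := by
  have h := hasSum_intervalIntegral_of_nonneg zero_le_one
    (f := fun n t => (t ^ (2 * n + 1) - t ^ (4 * n + 3)) / (n + 1))
    (fun n => by fun_prop)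
    (fun n t ⟨ht0, ht1⟩ =>
      div_nonneg (sub_nonneg.2 (pow_le_pow_of_le_one ht0.le ht1.le (by lia))) (by positivity))
    (by simpa only [integral_pow_sub_pow_div_succ]
      using hasSum_one_div_four_mul_add_one_sq.summable)
    (fun t ht => hasSum_pow_sub_pow_div_succ ht)
  simpa only [integral_pow_sub_pow_div_succ] using h

theorem integral_log_one_add_sq_div_self :
    ∫ t in Ioo (0 : ℝ) 1, log (1 + t ^ 2) / t = π ^ 2 / 24 :=
  hasSum_one_div_four_mul_sq_integral.unique hasSum_one_div_four_mul_add_one_sq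

theorem stmt_8 :
    ∑' n : ℕ,
        (1 : ℝ) / ((n + 1) ^ 2 * 2 ^ (n + 1)) *
          (1 - 1 / (Nat.choose (3 * (n + 1)) (n + 1))) =
      Real.pi ^ 2 / 24 :=
  hasSum_one_sub_inv_choose_integral.tsum_eq.trans integral_log_one_add_sq_div_self
end

section
/- For real x with 0 < x < 1, the antiderivative identity holds: d/dx [−2x + 2√(1−x²)·arcsin(x) + x·arcsin(x)²] = arcsin(x)², and consequently −2x + 2√(1−x²)·arcsin(x) + x·arcsin(x)² = (1/2) ∑_{n≥0} 4^{n+1} x^{2n+3} / ((2n+3)(2n+2)(2n+1) binom(2n,n)). -/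
/-! With `b n = 4 ^ n / ((2n+1) C(2n,n))`, the recurrence `(2n+3) b (n+1) = (2n+2) b n` says that
`A(t) = ∑ b n t^(2n+1)` solves `(1 - t²) A' = 1 + t A`, so `(√(1-t²) A)' = 1 / √(1-t²)` and
`A = arcsin / √(1-t²)`. Integrating term by term twice (primitives on `(-1, 1)` are determined
by their value at `0`) gives `∑ b n/(n+1) t^(2n+2) = arcsin² t` and then
`∑ b n/((n+1)(2n+3)) t^(2n+3) = -2t + 2√(1-t²) arcsin t + t arcsin² t`; these coefficients are
half of the ones in the statement. -/

open Real Set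

noncomputable def arcsinCoeff (n : ℕ) : ℝ := 4 ^ n / ((2 * n + 1) * n.centralBinom)

lemma arcsinCoeff_zero : arcsinCoeff 0 = 1 := by simp [arcsinCoeff]

lemma arcsinCoeff_pos (n : ℕ) : 0 < arcsinCoeff n := by
  have := Nat.centralBinom_pos n
  unfold arcsinCoeff; positivity

lemma arcsinCoeff_succ (n : ℕ) :
    (2 * n + 3) * arcsinCoeff (n + 1) = (2 * n + 2) * arcsinCoeff n := by
  have h : ((n : ℝ) + 1) * (n + 1).centralBinom = 2 * (2 * n + 1) * n.centralBinom := by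
    exact_mod_cast Nat.succ_mul_centralBinom_succ n
  have := Nat.centralBinom_pos n
  have := Nat.centralBinom_pos (n + 1)
  unfold arcsinCoeff
  field_simp
  push_cast
  linear_combination (-2 * (2 * (n : ℝ) + 3) * 4 ^ n) * h

lemma arcsinCoeff_le_one (n : ℕ) : arcsinCoeff n ≤ 1 := by
  induction n with
  | zero => rw [arcsinCoeff_zero]
  | succ n ih => nlinarith [arcsinCoeff_succ n, arcsinCoeff_pos n, arcsinCoeff_pos (n + 1)]

section TermwiseDerivative

variable {d : ℕ → ℝ} {C : ℝ}

lemma abs_mul_pow_le (hd : ∀ n, |d n| ≤ C * (n + 1)) {z r : ℝ} (hz : |z| ≤ r) (hr : r ≤ 1)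
    (n k : ℕ) : |d n * z ^ (2 * n + k)| ≤ C * (n + 1) * (r ^ 2) ^ n := by
  have hr0 : 0 ≤ r := (abs_nonneg z).trans hz
  have hpow : |z| ^ (2 * n + k) ≤ (r ^ 2) ^ n := by
    rw [← pow_mul]
    exact (pow_le_pow_left₀ (abs_nonneg z) hz _).trans (pow_le_pow_of_le_one hr0 hr (by omega))
  rw [abs_mul, abs_pow]
  exact mul_le_mul (hd n) hpow (by positivity) ((abs_nonneg _).trans (hd n))

lemma summable_mul_succ_mul_geometric {q : ℝ} (hq0 : 0 ≤ q) (hq1 : q < 1) (C : ℝ) :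
    Summable fun n : ℕ => C * (n + 1) * q ^ n := by
  have hq : ‖q‖ < 1 := by rwa [norm_of_nonneg hq0]
  refine (((summable_pow_mul_geometric_of_norm_lt_one 1 hq).add
    (summable_geometric_of_lt_one hq0 hq1)).mul_left C).congr fun n => ?_
  ring

lemma summable_mul_pow (hd : ∀ n, |d n| ≤ C * (n + 1)) {y : ℝ} (hy : |y| < 1) (k : ℕ) :
    Summable fun n => d n * y ^ (2 * n + k) :=
  .of_norm_bounded
    (summable_mul_succ_mul_geometric (sq_nonneg _) (by nlinarith [abs_nonneg y, sq_abs y]) C)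
    fun n => abs_mul_pow_le hd le_rfl hy.le n k

lemma hasDerivAt_tsum_mul_pow {c : ℕ → ℝ} (k : ℕ) (hcd : ∀ n, (2 * n + k + 1) * c n = d n)
    (hd : ∀ n, |d n| ≤ C * (n + 1)) {y : ℝ} (hy : |y| < 1) :
    HasDerivAt (fun t => ∑' n, c n * t ^ (2 * n + k + 1)) (∑' n, d n * y ^ (2 * n + k)) y := by
  obtain ⟨r, hyr, hr1⟩ : ∃ r, |y| < r ∧ r < 1 := exists_between hy
  have hr0 : 0 < r := (abs_nonneg y).trans_lt hyr
  have mem {t : ℝ} : t ∈ Metric.ball 0 r ↔ |t| < r := by rw [mem_ball_zero_iff, norm_eq_abs]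
  have hterm (n : ℕ) (z : ℝ) :
      HasDerivAt (fun t => c n * t ^ (2 * n + k + 1)) (d n * z ^ (2 * n + k)) z := by
    refine ((hasDerivAt_pow (2 * n + k + 1) z).const_mul (c n)).congr_deriv ?_
    rw [← hcd, Nat.add_sub_cancel]
    push_cast
    ring
  exact hasDerivAt_tsum_of_isPreconnected
    (summable_mul_succ_mul_geometric (sq_nonneg r) (by nlinarith) C)
    Metric.isOpen_ball (convex_ball (0 : ℝ) r).isPreconnected (fun n z _ => hterm n z)
    (fun n z hz => abs_mul_pow_le hd (mem.1 hz).le hr1.le n k) (Metric.mem_ball_self hr0)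
    (summable_zero.congr fun n => by simp) (mem.2 hyr)

end TermwiseDerivative

lemma eq_of_hasDerivAt_eq_of_abs_lt_one {f g f' : ℝ → ℝ}
    (hf : ∀ t, |t| < 1 → HasDerivAt f (f' t) t) (hg : ∀ t, |t| < 1 → HasDerivAt g (f' t) t)
    (h0 : f 0 = g 0) {x : ℝ} (hx : |x| < 1) : f x = g x := by
  have mem {t : ℝ} : t ∈ Metric.ball 0 1 ↔ |t| < 1 := by rw [mem_ball_zero_iff, norm_eq_abs]
  refine Metric.isOpen_ball.eqOn_of_deriv_eq (convex_ball (0 : ℝ) 1).isPreconnected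
    (fun t ht => (hf t (mem.1 ht)).differentiableAt.differentiableWithinAt)
    (fun t ht => (hg t (mem.1 ht)).differentiableAt.differentiableWithinAt)
    (fun t ht => ?_) (Metric.mem_ball_self one_pos) h0 (mem.2 hx)
  rw [(hf t (mem.1 ht)).deriv, (hg t (mem.1 ht)).deriv]

lemma abs_mul_arcsinCoeff_le {p : ℝ} (n : ℕ) (hp0 : 0 ≤ p) (hp : p ≤ 2 * (n + 1)) :
    |p * arcsinCoeff n| ≤ 2 * (n + 1) := by
  have := arcsinCoeff_pos n
  rw [abs_of_nonneg (by positivity)]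
  nlinarith [arcsinCoeff_le_one n]

lemma hasDerivAt_arcsin_of_abs_lt_one {y : ℝ} (hy : |y| < 1) :
    HasDerivAt arcsin (1 / √(1 - y ^ 2)) y :=
  hasDerivAt_arcsin (abs_lt.1 hy).1.ne' (abs_lt.1 hy).2.ne

lemma hasDerivAt_sqrt_one_sub_sq {y : ℝ} (hy : |y| < 1) :
    HasDerivAt (fun t => √(1 - t ^ 2)) (-y / √(1 - y ^ 2)) y := by
  have hy2 : 0 < 1 - y ^ 2 := by nlinarith [abs_nonneg y, sq_abs y]
  refine ((hasDerivAt_sqrt hy2.ne').comp y ((hasDerivAt_pow 2 y).const_sub 1)).congr_deriv ?_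
  field_simp
  norm_num

noncomputable def arcsinDivSqrtSeries (t : ℝ) : ℝ := ∑' n, arcsinCoeff n * t ^ (2 * n + 1)

lemma hasDerivAt_arcsinDivSqrtSeries {y : ℝ} (hy : |y| < 1) :
    HasDerivAt arcsinDivSqrtSeries (∑' n, (2 * n + 1) * arcsinCoeff n * y ^ (2 * n)) y :=
  hasDerivAt_tsum_mul_pow 0 (fun n => by simp)
    (fun n => abs_mul_arcsinCoeff_le n (by positivity) (by linarith)) hy

lemma one_sub_sq_mul_deriv_arcsinDivSqrtSeries {y : ℝ} (hy : |y| < 1) :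
    (1 - y ^ 2) * ∑' n, (2 * n + 1) * arcsinCoeff n * y ^ (2 * n) =
      1 + y * arcsinDivSqrtSeries y := by
  have hderiv : Summable fun n => (2 * n + 1) * arcsinCoeff n * y ^ (2 * n) :=
    summable_mul_pow (fun n => abs_mul_arcsinCoeff_le n (by positivity) (by linarith)) hy 0
  have hseries : Summable fun n => arcsinCoeff n * y ^ (2 * n + 1) :=
    summable_mul_pow (C := 2) (fun n => by
      simpa using abs_mul_arcsinCoeff_le n zero_le_one (by linarith [n.cast_nonneg (α := ℝ)]))
      hy 1
  have hshift : ∀ n : ℕ, (2 * ↑(n + 1) + 1) * arcsinCoeff (n + 1) * y ^ (2 * (n + 1)) =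
      y ^ 2 * ((2 * n + 1) * arcsinCoeff n * y ^ (2 * n)) +
        y * (arcsinCoeff n * y ^ (2 * n + 1)) := fun n => by
    rw [mul_add 2 n 1, pow_succ, pow_succ]
    push_cast
    linear_combination y ^ (2 * n) * y * y * arcsinCoeff_succ n
  have hfixed : ∑' n, (2 * n + 1) * arcsinCoeff n * y ^ (2 * n) =
      1 + y ^ 2 * ∑' n, (2 * n + 1) * arcsinCoeff n * y ^ (2 * n) +
        y * arcsinDivSqrtSeries y := by
    nth_rewrite 1 [hderiv.tsum_eq_zero_add]
    rw [tsum_congr hshift, (hderiv.mul_left _).tsum_add (hseries.mul_left _), tsum_mul_left,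
      tsum_mul_left, arcsinDivSqrtSeries]
    simp [arcsinCoeff_zero, add_assoc]
  linear_combination hfixed

lemma hasDerivAt_sqrt_mul_arcsinDivSqrtSeries {y : ℝ} (hy : |y| < 1) :
    HasDerivAt (fun t => √(1 - t ^ 2) * arcsinDivSqrtSeries t) (1 / √(1 - y ^ 2)) y := by
  have hy2 : 0 < 1 - y ^ 2 := by nlinarith [abs_nonneg y, sq_abs y]
  have hsq : √(1 - y ^ 2) ^ 2 = 1 - y ^ 2 := sq_sqrt hy2.le
  refine ((hasDerivAt_sqrt_one_sub_sq hy).mul (hasDerivAt_arcsinDivSqrtSeries hy)).congr_deriv ?_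
  have hode := one_sub_sq_mul_deriv_arcsinDivSqrtSeries hy
  field_simp
  linear_combination hode + (∑' n, (2 * n + 1) * arcsinCoeff n * y ^ (2 * n)) * hsq

lemma sqrt_mul_arcsinDivSqrtSeries {y : ℝ} (hy : |y| < 1) :
    √(1 - y ^ 2) * arcsinDivSqrtSeries y = arcsin y :=
  eq_of_hasDerivAt_eq_of_abs_lt_one (fun _ => hasDerivAt_sqrt_mul_arcsinDivSqrtSeries)
    (fun _ => hasDerivAt_arcsin_of_abs_lt_one) (by simp [arcsinDivSqrtSeries]) hy

noncomputable def arcsinSqSeries (t : ℝ) : ℝ := ∑' n, arcsinCoeff n / (n + 1) * t ^ (2 * n + 2)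

lemma arcsinSqSeries_eq {y : ℝ} (hy : |y| < 1) : arcsinSqSeries y = arcsin y ^ 2 := by
  refine eq_of_hasDerivAt_eq_of_abs_lt_one (g := fun t => arcsin t ^ 2)
    (f' := fun t => 2 * arcsinDivSqrtSeries t)
    (fun t ht => ?_) (fun t ht => ?_) (by simp [arcsinSqSeries]) hy
  · rw [arcsinDivSqrtSeries, ← tsum_mul_left]
    simp_rw [← mul_assoc]
    exact hasDerivAt_tsum_mul_pow 1 (fun n => by field_simp; ring)
      (fun n => abs_mul_arcsinCoeff_le n zero_le_two (by linarith [n.cast_nonneg (α := ℝ)])) ht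
  · have hsqrt : 0 < √(1 - t ^ 2) := sqrt_pos.2 (by nlinarith [abs_nonneg t, sq_abs t])
    refine ((hasDerivAt_arcsin_of_abs_lt_one ht).pow 2).congr_deriv ?_
    rw [← sqrt_mul_arcsinDivSqrtSeries ht]
    field_simp
    ring

noncomputable def arcsinSqIntegralSeries (t : ℝ) : ℝ :=
  ∑' n, arcsinCoeff n / ((n + 1) * (2 * n + 3)) * t ^ (2 * n + 3)

lemma hasDerivAt_arcsinSqIntegralSeries {y : ℝ} (hy : |y| < 1) :
    HasDerivAt arcsinSqIntegralSeries (arcsinSqSeries y) y := by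
  refine hasDerivAt_tsum_mul_pow (C := 2) 2 (fun n => by field_simp; ring) (fun n => ?_) hy
  rw [div_eq_inv_mul]
  refine abs_mul_arcsinCoeff_le n (by positivity) ?_
  have hn : (1 : ℝ) ≤ n + 1 := by linarith [n.cast_nonneg (α := ℝ)]
  exact (inv_le_one_of_one_le₀ hn).trans (by linarith)

lemma hasDerivAt_arcsinSq_primitive {y : ℝ} (hy : |y| < 1) :
    HasDerivAt (fun t => -2 * t + 2 * √(1 - t ^ 2) * arcsin t + t * arcsin t ^ 2)
      (arcsin y ^ 2) y := by
  have hsqrt : 0 < √(1 - y ^ 2) := sqrt_pos.2 (by nlinarith [abs_nonneg y, sq_abs y])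
  have harcsin := hasDerivAt_arcsin_of_abs_lt_one hy
  refine ((((hasDerivAt_id y).const_mul (-2)).add
    (((hasDerivAt_sqrt_one_sub_sq hy).const_mul 2).mul harcsin)).add
    ((hasDerivAt_id y).mul (harcsin.pow 2))).congr_deriv ?_
  simp only [id, Pi.pow_apply]
  field_simp
  ring

lemma arcsinSqIntegralSeries_eq {y : ℝ} (hy : |y| < 1) :
    arcsinSqIntegralSeries y = -2 * y + 2 * √(1 - y ^ 2) * arcsin y + y * arcsin y ^ 2 :=
  eq_of_hasDerivAt_eq_of_abs_lt_one
    (fun t ht => (arcsinSqSeries_eq ht) ▸ hasDerivAt_arcsinSqIntegralSeries ht)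
    (fun _ => hasDerivAt_arcsinSq_primitive) (by simp [arcsinSqIntegralSeries]) hy

theorem stmt_19 (x : ℝ) (hx : 0 < x ∧ x < 1) :
    HasDerivAt
        (fun t : ℝ =>
          -2 * t + 2 * Real.sqrt (1 - t ^ 2) * Real.arcsin t + t * Real.arcsin t ^ 2)
        (Real.arcsin x ^ 2) x ∧
      -2 * x + 2 * Real.sqrt (1 - x ^ 2) * Real.arcsin x + x * Real.arcsin x ^ 2 =
        (1 / 2) * ∑' n : ℕ,
          (4 : ℝ) ^ (n + 1) * x ^ (2 * n + 3) /
            ((2 * n + 3) * (2 * n + 2) * (2 * n + 1) * (Nat.choose (2 * n) n)) := by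
  have hx1 : |x| < 1 := abs_lt.2 ⟨by linarith, hx.2⟩
  refine ⟨hasDerivAt_arcsinSq_primitive hx1, ?_⟩
  rw [← arcsinSqIntegralSeries_eq hx1, arcsinSqIntegralSeries, ← tsum_mul_left]
  refine tsum_congr fun n => ?_
  rw [arcsinCoeff, Nat.centralBinom_eq_two_mul_choose]
  have := Nat.choose_pos (Nat.le_mul_of_pos_left n two_pos)
  field_simp
  ring
end
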